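/- Let h : [α, ∞) → ℝ be a function such that x ↦ (h(x) - h(α))/(x - α) is decreasing on (α, ∞) (e.g. h concave). Then for any 0 < a < b there exist γ > 0 and Λ > 0 such that for all λ > Λ, h(bλ) ≤ γ · h(aλ). -/
import Mathlib


theorem stmt_6 (h : ℝ → ℝ) (α a b : ℝ) (hα : 0 < α)
    (hslope : AntitoneOn (fun x => (h x - h α) / (x - α)) (Set.Ioi α))
    (hconc : ConcaveOn ℝ (Set.Ici α) h)
    (hpos : ∀ x ∈ Set.Ici α, 0 < h x)
    (hmono : MonotoneOn h (Set.Ici α))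
    (ha : 0 < a) (hab : a < b) :
    ∃ γ > 0, ∃ Λ > 0, ∀ l > Λ, h (b * l) ≤ γ * h (a * l) := by
  have hb : 0 < b := ha.trans hab
  refine ⟨1 + 2*b/a, by positivity, 2*α/a, by positivity, fun l hl => ?_⟩
  have hlpos : 0 < l := lt_trans (by positivity) hl
  have h2α : 2*α < a*l := by
    have := (div_lt_iff₀ ha).mp hl
    nlinarith
  have hal : α < a * l := by linarith
  have hbl : a*l < b*l := by nlinarith
  have hαbl : α < b*l := lt_trans hal hbl
  have hs := hslope (Set.mem_Ioi.mpr hal) (Set.mem_Ioi.mpr hαbl) (le_of_lt hbl)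
  simp only at hs
  have key : (h (b*l) - h α) * (a*l - α) ≤ (h (a*l) - h α) * (b*l - α) := by
    have h1 : 0 < a*l - α := by linarith
    have h2 : 0 < b*l - α := by linarith
    exact (div_le_div_iff₀ h2 h1).mp hs
  have hr : (b*l - α) * a ≤ 2*b*(a*l - α) := by nlinarith
  have hm : h α ≤ h (a*l) := hmono (Set.self_mem_Ici) (Set.mem_Ici.mpr (le_of_lt hal)) (le_of_lt hal)
  have hαpos : 0 < h α := hpos α Set.self_mem_Ici
  have h1 : 0 < a*l - α := by linarith
  have hgoal : h (b*l) * a ≤ (a + 2*b) * h (a*l) := by nlinarith [mul_le_mul_of_nonneg_left key ha.le, mul_le_mul_of_nonneg_left hr (sub_nonneg.mpr hm), mul_pos hαpos h1, mul_le_mul_of_nonneg_right hm (mul_pos ha h1).le]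
  have : (1 + 2*b/a) * h (a*l) = (a + 2*b) * h (a*l) / a := by field_simp
  rw [this, le_div_iff₀ ha]
  linarith
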